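/- Let G be a finite connected simple graph, T a spanning tree of G, G̃ the lift of G with respect to T, and F the cut-indicator map. Then for every walk W̃ in G̃ from x to y, ‖F(x) − F(y)‖₁ equals the number of edges e of G whose multiplicity in the projected walk π(W̃) is odd. -/

import Mathlib

open SimpleGraph

noncomputable section
attribute [local instance] Classical.propDecidable

variable {V : Type*}

/-- The set `S` of edges of `G` not in the spanning tree `T`. -/
def nonTreeEdges (G T : SimpleGraph V) : Set (Sym2 V) := G.edgeSet \ T.edgeSet

/-- The lift `G̃` of `G` with respect to the spanning tree `T`: its vertices are the pairs
`(u, f)` with `u ∈ V(G)` and `f : S → ZMod 2`; `(u,f)` is adjacent to `(v,g)` iff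
`uv ∈ E(G)` and `g` agrees with `f` except that `g(uv) = f(uv) + 1` when `uv ∈ S`
(so `g = f` when `uv ∈ E(T)`). -/
def liftGraph (G T : SimpleGraph V) :
    SimpleGraph (V × (nonTreeEdges G T → ZMod 2)) where
  Adj p q := G.Adj p.1 q.1 ∧
    q.2 = fun e => p.2 e + (if (e : Sym2 V) = s(p.1, q.1) then 1 else 0)
  symm := by
    constructor
    rintro p q ⟨hadj, hf⟩
    refine ⟨hadj.symm, ?_⟩
    have key : ∀ a c : ZMod 2, a + c + c = a := by decide
    funext e
    have hs : s(q.1, p.1) = s(p.1, q.1) := Sym2.eq_swap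
    rw [hs, hf]
    exact (key _ _).symm
  loopless := ⟨fun p h => G.loopless.irrefl p.1 h.1⟩

/-- The projection `π : G̃ → G` on vertices, as a graph homomorphism. -/
def liftProj (G T : SimpleGraph V) : liftGraph G T →g G :=
  ⟨Prod.fst, fun h => And.left h⟩

/-- The projection `π` on edges of the lift. -/
def edgeProj (G T : SimpleGraph V) :
    Sym2 (V × (nonTreeEdges G T → ZMod 2)) → Sym2 V :=
  Sym2.map Prod.fst

/-- Indicator (in `ZMod 2`) that an edge `s` joins the vertex set `B` to its complement:
it equals `1` iff exactly one endpoint of `s` lies in `B`. -/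
def crossIndicator (B : Set V) : Sym2 V → ZMod 2 :=
  Sym2.lift ⟨fun p q => (if p ∈ B then 1 else 0) + (if q ∈ B then 1 else 0),
    fun p q => add_comm _ _⟩

/-- For a tree edge `e`, the side `B` of `T - e`: the component of `T - e` containing the
second endpoint of `e`. -/
def treeSide (T : SimpleGraph V) (e : Sym2 V) : Set V :=
  {v | (T.deleteEdges {e}).Reachable (Quot.out e).2 v}

/-- The function `h_e` on the vertices of the lift: for `e ∈ S`, `h_e (v, f) = f e`;
for a tree edge `e`, `h_e (v, f)` is the indicator that `v` lies in the component `B`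
of `T - e` plus the sum of the values `f s` over the edges `s ∈ S` joining the two
components of `T - e`. -/
def hcut (G T : SimpleGraph V) (e : Sym2 V) :
    V × (nonTreeEdges G T → ZMod 2) → ZMod 2 := fun p =>
  if he : e ∈ nonTreeEdges G T then p.2 ⟨e, he⟩
  else (if p.1 ∈ treeSide T e then 1 else 0) +
    ∑ᶠ s : nonTreeEdges G T, crossIndicator (treeSide T e) s * p.2 s

/-- The cut-indicator map `F : V(G̃) → ℝ^{E(G)}`, `F(x)(e) = h_e(x) ∈ {0,1}`, with
`ℝ^{E(G)}` carrying the `ℓ₁`-norm. -/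
def cutMap (G T : SimpleGraph V) :
    (V × (nonTreeEdges G T → ZMod 2)) → PiLp 1 (fun _ : G.edgeSet => ℝ) :=
  fun p => WithLp.toLp 1 (fun e => ((hcut G T e p).val : ℝ))

lemma sym2_mk_out (e : Sym2 V) : s((Quot.out e).1, (Quot.out e).2) = e := by
  conv_rhs => rw [← Quot.out_eq e]

lemma treeSide_snd_mem (T : SimpleGraph V) (e : Sym2 V) : (Quot.out e).2 ∈ treeSide T e :=
  Reachable.refl _

lemma treeSide_fst_not_mem (T : SimpleGraph V) (hT : T.IsAcyclic) {e : Sym2 V}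
    (he : e ∈ T.edgeSet) : (Quot.out e).1 ∉ treeSide T e := by
  intro hmem
  have hb := (isAcyclic_iff_forall_edge_isBridge.mp hT) he
  rw [← sym2_mk_out e, isBridge_iff] at hb
  have hEq : T.deleteEdges {e} = T \ fromEdgeSet {s((Quot.out e).1, (Quot.out e).2)} := by
    rw [sym2_mk_out]; rfl
  exact hb (by rw [sym2_mk_out]; exact hmem.symm)

lemma crossIndicator_tree_edge (T : SimpleGraph V) (hT : T.IsAcyclic) {e : Sym2 V}
    (he : e ∈ T.edgeSet) {u v : V} (huv : T.Adj u v) :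
    crossIndicator (treeSide T e) s(u, v) = if e = s(u, v) then 1 else 0 := by
  simp only [crossIndicator, Sym2.lift_mk]
  by_cases hef : e = s(u, v)
  · have ha := treeSide_fst_not_mem T hT he
    have hb := treeSide_snd_mem T e
    have hout : s((Quot.out e).1, (Quot.out e).2) = s(u, v) := by rw [sym2_mk_out, hef]
    rw [Sym2.eq_iff] at hout
    rw [if_pos hef]
    rcases hout with ⟨h1, h2⟩ | ⟨h1, h2⟩ <;> subst h1 <;> subst h2 <;> simp [ha, hb]
  · have hadj : (T.deleteEdges {e}).Adj u v := by
      rw [SimpleGraph.deleteEdges_adj]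
      exact ⟨huv, by simp only [Set.mem_singleton_iff]; exact fun h => hef h.symm⟩
    have hiff : u ∈ treeSide T e ↔ v ∈ treeSide T e :=
      ⟨fun h => h.trans hadj.reachable, fun h => h.trans hadj.symm.reachable⟩
    rw [if_neg hef]
    by_cases hu : u ∈ treeSide T e
    · rw [if_pos hu, if_pos (hiff.mp hu)]; decide
    · rw [if_neg hu, if_neg (fun h => hu (hiff.mpr h))]; decide

lemma crossIndicator_mk (B : Set V) (u v : V) :
    crossIndicator B s(u, v) = (if u ∈ B then 1 else 0) + (if v ∈ B then 1 else 0) := by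
  simp only [crossIndicator, Sym2.lift_mk]

lemma hcut_step {V : Type*} [Fintype V] (G T : SimpleGraph V) (hT : T.IsAcyclic)
    {e : Sym2 V} (he : e ∈ G.edgeSet)
    {p q : V × (nonTreeEdges G T → ZMod 2)} (h : (liftGraph G T).Adj p q) :
    hcut G T e q = hcut G T e p + (if e = s(p.1, q.1) then 1 else 0) := by
  obtain ⟨hadj, hq⟩ := h
  by_cases hS : e ∈ nonTreeEdges G T
  · simp only [hcut, dif_pos hS, hq]
  · have heT : e ∈ T.edgeSet := by
      by_contra h'
      exact hS ⟨he, h'⟩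
    simp only [hcut, dif_neg hS]
    rw [finsum_eq_sum_of_fintype, finsum_eq_sum_of_fintype]
    by_cases hf : s(p.1, q.1) ∈ nonTreeEdges G T
    · have hq2 : ∀ s : nonTreeEdges G T,
          q.2 s = p.2 s + (if s = (⟨s(p.1, q.1), hf⟩ : nonTreeEdges G T) then 1 else 0) := by
        intro s
        simp only [hq]
        congr 1
        by_cases hs : s = (⟨s(p.1, q.1), hf⟩ : nonTreeEdges G T)
        · rw [if_pos (show (↑s : Sym2 V) = s(p.1, q.1) by rw [hs]), if_pos hs]
        · rw [if_neg (fun h => hs (Subtype.ext h)), if_neg hs]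
      have hsum : ∑ s : nonTreeEdges G T, crossIndicator (treeSide T e) ↑s * q.2 s =
          (∑ s : nonTreeEdges G T, crossIndicator (treeSide T e) ↑s * p.2 s) +
            crossIndicator (treeSide T e) s(p.1, q.1) := by
        have hterm : ∀ s : nonTreeEdges G T, crossIndicator (treeSide T e) ↑s * q.2 s =
            crossIndicator (treeSide T e) ↑s * p.2 s +
              (if s = (⟨s(p.1, q.1), hf⟩ : nonTreeEdges G T)
                then crossIndicator (treeSide T e) ↑s else 0) := by
          intro s
          rw [hq2 s, mul_add, mul_ite, mul_one, mul_zero]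
        rw [Finset.sum_congr rfl (fun s _ => hterm s), Finset.sum_add_distrib,
          Finset.sum_ite_eq' Finset.univ (⟨s(p.1, q.1), hf⟩ : nonTreeEdges G T)
            (fun s => crossIndicator (treeSide T e) ↑s),
          if_pos (Finset.mem_univ _)]
      rw [hsum, crossIndicator_mk, if_neg (fun hh : e = s(p.1, q.1) => hf.2 (hh ▸ heT))]
      have key : ∀ a b c : ZMod 2, b + (c + (a + b)) = a + c + 0 := by decide
      exact key _ _ _
    · have hfT : T.Adj p.1 q.1 := by
        by_contra h'
        exact hf ⟨(G.mem_edgeSet).mpr hadj, fun hh => h' ((T.mem_edgeSet).mp hh)⟩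
      have hq2 : q.2 = p.2 := by
        funext s
        simp only [hq]
        rw [if_neg (fun hh : (↑s : Sym2 V) = s(p.1, q.1) => hf (hh ▸ s.2)), add_zero]
      rw [hq2]
      have hd : (if e = s(p.1, q.1) then (1 : ZMod 2) else 0) =
          (if p.1 ∈ treeSide T e then 1 else 0) + (if q.1 ∈ treeSide T e then 1 else 0) := by
        rw [← crossIndicator_tree_edge T hT heT hfT, crossIndicator_mk]
      rw [hd]
      have key : ∀ a b c : ZMod 2, b + c = a + c + (a + b) := by decide
      exact key _ _ _

lemma hcut_walk {V : Type*} [Fintype V] (G T : SimpleGraph V) (hT : T.IsAcyclic)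
    {e : Sym2 V} (he : e ∈ G.edgeSet)
    {x y : V × (nonTreeEdges G T → ZMod 2)} (W : (liftGraph G T).Walk x y) :
    hcut G T e x + hcut G T e y = ((W.edges.map (edgeProj G T)).count e : ZMod 2) := by
  induction W with
  | nil =>
    simp only [Walk.edges_nil, List.map_nil, List.count_nil, Nat.cast_zero]
    have key : ∀ a : ZMod 2, a + a = 0 := by decide
    exact key _
  | cons h w ih =>
    rename_i a b c
    rw [Walk.edges_cons, List.map_cons]
    have hproj : edgeProj G T s(a, b) = s(a.1, b.1) := Sym2.map_pair_eq _ _ _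
    rw [hproj]
    have hcount : ((s(a.1, b.1) :: List.map (edgeProj G T) w.edges).count e : ZMod 2) =
        ((List.map (edgeProj G T) w.edges).count e : ZMod 2) +
          (if e = s(a.1, b.1) then 1 else 0) := by
      rw [List.count_cons]
      push_cast
      congr 1
      by_cases hh : e = s(a.1, b.1)
      · simp [hh]
      · have hh' : ¬s(a.1, b.1) = e := fun h' => hh h'.symm
        simp [hh, hh']
    rw [hcount, ← ih, hcut_step G T hT he h]
    have key : ∀ a b d : ZMod 2, a + b = ((a + d) + b) + d := by decide
    exact key _ _ _

/-- Let `G` be a finite connected simple graph, `T` a spanning tree of `G`, `G̃` the lift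
of `G` with respect to `T`, and `F` the cut-indicator map. Then for every walk `W̃` in `G̃`
from `x` to `y`, `‖F(x) − F(y)‖₁` equals the number of edges `e` of `G` whose multiplicity
in the projected walk `π(W̃)` is odd. -/
theorem cutMap_norm_eq_odd_multiplicity_count {V : Type*} [Fintype V] (G T : SimpleGraph V)
    (hG : G.Connected) (hT : T.IsTree) (hTG : T ≤ G)
    (x y : V × (nonTreeEdges G T → ZMod 2)) (W : (liftGraph G T).Walk x y) :
    ‖cutMap G T x - cutMap G T y‖ =
      ({e : Sym2 V | e ∈ G.edgeSet ∧ Odd ((W.edges.map (edgeProj G T)).count e)}.ncard : ℝ) := by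
  have habs : ∀ a b : ZMod 2, |((a.val : ℕ) : ℝ) - ((b.val : ℕ) : ℝ)| = (((a + b).val : ℕ) : ℝ) := by
    intro a b
    fin_cases a <;> fin_cases b <;>
      simp [show (1 + 1 : ZMod 2) = 0 from rfl, ZMod.val] <;> norm_num <;> exact_mod_cast rfl
  have hodd : ∀ n : ℕ, (((n : ZMod 2)).val : ℝ) = if Odd n then 1 else 0 := by
    intro n
    rw [ZMod.val_natCast]
    rcases Nat.even_or_odd n with h | h
    · rw [Nat.even_iff.mp h, if_neg (Nat.not_odd_iff_even.mpr h)]; norm_num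
    · rw [Nat.odd_iff.mp h, if_pos h]; norm_num
  have hnorm : ‖cutMap G T x - cutMap G T y‖ =
      ∑ i : G.edgeSet, ‖(cutMap G T x - cutMap G T y) i‖ := by
    rw [PiLp.norm_eq_sum (p := 1) (by norm_num)]
    simp [Real.rpow_one]
  rw [hnorm]
  have hterm : ∀ i : G.edgeSet, ‖(cutMap G T x - cutMap G T y) i‖ =
      if Odd ((W.edges.map (edgeProj G T)).count (i : Sym2 V)) then (1 : ℝ) else 0 := by
    intro i
    have hw := hcut_walk G T hT.2 i.2 W
    have h1 : ‖(cutMap G T x - cutMap G T y) i‖ =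
        |((hcut G T ↑i x).val : ℝ) - ((hcut G T ↑i y).val : ℝ)| := by
        simp [cutMap, Real.norm_eq_abs]
    rw [h1, habs, hw, hodd]
  rw [Finset.sum_congr rfl fun i _ => hterm i]
  have hset : {e : Sym2 V | e ∈ G.edgeSet ∧ Odd ((W.edges.map (edgeProj G T)).count e)} =
      ↑(G.edgeSet.toFinset.filter fun e => Odd ((W.edges.map (edgeProj G T)).count e)) := by
    ext e; simp [Set.mem_toFinset]
  rw [hset, Set.ncard_coe_finset,
    Finset.sum_set_coe (f := fun e => if Odd ((W.edges.map (edgeProj G T)).count e) then (1 : ℝ) else 0),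
    Finset.sum_boole]


end
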